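/- Let μ be a probability measure on ℝ^d, let s ≠ 0 and σ > 0 be reals, and let w : ℝ^d → [0,∞) be a bounded measurable function with ∫ w dμ > 0. Define g₁(x) = ∫ exp(−‖x − s·x₀‖²/(2 s² σ²)) dμ(x₀), g_w(x) = ∫ w(x₀) · exp(−‖x − s·x₀‖²/(2 s² σ²)) dμ(x₀), m₁(x) = (∫ x₀ · exp(−‖x − s·x₀‖²/(2 s² σ²)) dμ(x₀)) / g₁(x), and m_w(x) = (∫ x₀ · w(x₀) · exp(−‖x − s·x₀‖²/(2 s² σ²)) dμ(x₀)) / g_w(x). Then for every x ∈ ℝ^d, m_w(x) = m₁(x) + s σ² · ∇_x log( g_w(x) / g₁(x) ). (The conditional posterior mean equals the posterior mean drifted by the scaled likelihood score, since g_w/g₁ is proportional in x to p_t(y|x_t).) -/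

import Mathlib

/-!
With `a = s²σ²` the variance of `x` given `x₀`, differentiating under the integral sign (the
kernel's gradient is dominated because `r e^{-r²/2a} ≤ √a`) gives Tweedie's formula
`∇ log g_w(x) = (s m_w(x) - x) / a` for every integrable weight `w`. Subtracting the formulas for
`w` and for `w ≡ 1`, the `x` terms cancel: `∇ log (g_w / g₁) = (s / a) (m_w - m₁)`, and
`a / s = sσ²`.
-/

open MeasureTheory Real InnerProductSpace

theorem HasGradientAt.sub {F : Type*} [NormedAddCommGroup F] [InnerProductSpace ℝ F]
    [CompleteSpace F] {f g : F → ℝ} {f' g' x : F} (hf : HasGradientAt f f' x)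
    (hg : HasGradientAt g g' x) : HasGradientAt (fun y => f y - g y) (f' - g') x := by
  rw [hasGradientAt_iff_hasFDerivAt, map_sub]
  exact hf.hasFDerivAt.sub hg.hasFDerivAt

theorem HasGradientAt.log {F : Type*} [NormedAddCommGroup F] [InnerProductSpace ℝ F]
    [CompleteSpace F] {f : F → ℝ} {f' x : F} (hf : HasGradientAt f f' x) (hx : f x ≠ 0) :
    HasGradientAt (fun y => log (f y)) ((f x)⁻¹ • f') x := by
  rw [hasGradientAt_iff_hasFDerivAt, map_smul]
  exact hf.hasFDerivAt.log hx |>.congr_fderiv (by ext; simp)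

theorem mul_exp_neg_sq_div_le_sqrt {a : ℝ} (ha : 0 < a) (r : ℝ) :
    exp (-r ^ 2 / (2 * a)) * r ≤ √a := by
  obtain ⟨q, hq, rfl⟩ : ∃ q, 0 < q ∧ a = q ^ 2 := ⟨√a, sqrt_pos.mpr ha, (sq_sqrt ha.le).symm⟩
  have h_lin : r ≤ q * (1 + r ^ 2 / (2 * q ^ 2)) := by
    field_simp
    nlinarith [sq_nonneg (r - q)]
  have h_exp := mul_le_mul_of_nonneg_left (add_one_le_exp (r ^ 2 / (2 * q ^ 2))) hq.le
  rw [sqrt_sq hq.le, neg_div, exp_neg, inv_mul_le_iff₀ (exp_pos _)]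
  linarith [add_comm (r ^ 2 / (2 * q ^ 2)) 1]

section GaussianSmoothing

variable {E : Type*} [NormedAddCommGroup E] [InnerProductSpace ℝ E]

noncomputable def gaussKernel (s a : ℝ) (y v : E) : ℝ := exp (-‖y - s • v‖ ^ 2 / (2 * a))

noncomputable def smoothedDensity [MeasurableSpace E] (μ : Measure E) (w : E → ℝ) (s a : ℝ)
    (y : E) : ℝ :=
  ∫ v, w v * gaussKernel s a y v ∂μ

noncomputable def posteriorMean [MeasurableSpace E] (μ : Measure E) (w : E → ℝ) (s a : ℝ)
    (y : E) : E :=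
  (smoothedDensity μ w s a y)⁻¹ • ∫ v, (w v * gaussKernel s a y v) • v ∂μ

variable {s a : ℝ}

theorem gaussKernel_pos (y v : E) : 0 < gaussKernel s a y v := exp_pos _

theorem gaussKernel_le_one (ha : 0 ≤ a) (y v : E) : gaussKernel s a y v ≤ 1 :=
  exp_le_one_iff.mpr (div_nonpos_of_nonpos_of_nonneg (by simp) (by positivity))

theorem continuous_gaussKernel (y : E) : Continuous (gaussKernel s a y) := by
  unfold gaussKernel; fun_prop

theorem gaussKernel_mul_norm_le (ha : 0 < a) (y v : E) :
    gaussKernel s a y v * ‖y - s • v‖ ≤ √a :=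
  mul_exp_neg_sq_div_le_sqrt ha _

theorem hasGradientAt_gaussKernel [CompleteSpace E] (y v : E) :
    HasGradientAt (fun y => gaussKernel s a y v)
      ((-a⁻¹ * gaussKernel s a y v) • (y - s • v)) y := by
  have h := (((hasFDerivAt_id y).sub_const (s • v)).norm_sq.neg.mul_const (2 * a)⁻¹).exp
  rw [hasGradientAt_iff_hasFDerivAt]
  refine (h.congr_fderiv ?_).congr_of_eventuallyEq (.of_forall fun z => ?_)
  · ext z
    simp only [gaussKernel, id_eq, map_sub, map_smul, map_neg, smul_neg, neg_smul, neg_apply,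
      smul_apply, sub_apply, ContinuousLinearMap.comp_id, coe_innerSL_apply, toDual_apply_apply,
      smul_eq_mul, nsmul_eq_mul, Nat.cast_ofNat, Pi.neg_apply, neg_mul, neg_inj, mul_inv_rev,
      div_eq_mul_inv]
    ring
  · simp [gaussKernel, div_eq_mul_inv]

variable [MeasurableSpace E] [BorelSpace E] {μ : Measure E} {w w' : E → ℝ}

theorem integrable_mul_gaussKernel (hw : Integrable w μ) (ha : 0 ≤ a) (y : E) :
    Integrable (fun v => w v * gaussKernel s a y v) μ :=
  hw.mul_bdd (continuous_gaussKernel y).aestronglyMeasurable <| .of_forall fun v => by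
    rw [norm_of_nonneg (gaussKernel_pos y v).le]
    exact gaussKernel_le_one ha y v

theorem smoothedDensity_pos (hw_nonneg : 0 ≤ w) (hw : Integrable w μ) (hw_pos : 0 < ∫ v, w v ∂μ)
    (ha : 0 ≤ a) (y : E) : 0 < smoothedDensity μ w s a y := by
  rw [integral_pos_iff_support_of_nonneg hw_nonneg hw] at hw_pos
  refine (integral_pos_iff_support_of_nonneg
    (fun v => mul_nonneg (hw_nonneg v) (gaussKernel_pos y v).le)
    (integrable_mul_gaussKernel hw ha y)).mpr ?_
  rwa [Function.support_mul_of_ne_zero_right w fun v => (gaussKernel_pos y v).ne']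

variable [CompleteSpace E] [SecondCountableTopology E]

theorem hasGradientAt_smoothedDensity (hw : Integrable w μ) (ha : 0 < a) (x : E) :
    HasGradientAt (smoothedDensity μ w s a)
      (-a⁻¹ • (smoothedDensity μ w s a x • x -
        s • ∫ v, (w v * gaussKernel s a x v) • v ∂μ)) x := by
  set G : E → E → E := fun y v => (w v * gaussKernel s a y v) • (y - s • v)
  have hG_le (y v : E) : ‖G y v‖ ≤ ‖w v‖ * √a := by
    rw [norm_smul, norm_mul, norm_of_nonneg (gaussKernel_pos y v).le, mul_assoc]
    exact mul_le_mul_of_nonneg_left (gaussKernel_mul_norm_le ha y v) (norm_nonneg _)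
  have hG_meas (y : E) : AEStronglyMeasurable (G y) μ :=
    (integrable_mul_gaussKernel hw ha.le y).aestronglyMeasurable.smul
      (by fun_prop : Continuous fun v : E => y - s • v).aestronglyMeasurable
  have hG_int : Integrable (G x) μ :=
    (hw.norm.mul_const √a).mono' (hG_meas x) (.of_forall (hG_le x))
  -- `s • ∫ (w k) • v = ∫ (w k) • x - ∫ G` needs no integrability of `v ↦ (w k) • v`
  have hG_integral : ∫ v, G x v ∂μ =
      smoothedDensity μ w s a x • x - s • ∫ v, (w v * gaussKernel s a x v) • v ∂μ := by
    have h : ∫ v, s • ((w v * gaussKernel s a x v) • v) ∂μ =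
        ∫ v, ((w v * gaussKernel s a x v) • x - G x v) ∂μ :=
      integral_congr_ae (.of_forall fun v => by simp only [G, smul_sub, smul_comm s]; abel)
    rw [integral_sub ((integrable_mul_gaussKernel hw ha.le x).smul_const x) hG_int,
      integral_smul_const, integral_smul] at h
    rw [smoothedDensity, h]
    abel
  have h_deriv := hasFDerivAt_integral_of_dominated_of_fderiv_le (μ := μ)
    (F := fun y v => w v * gaussKernel s a y v) (F' := fun y v => toDual ℝ E (-a⁻¹ • G y v))
    (bound := fun v => a⁻¹ * (‖w v‖ * √a)) Filter.univ_mem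
    (.of_forall fun y => (integrable_mul_gaussKernel hw ha.le y).aestronglyMeasurable)
    (integrable_mul_gaussKernel hw ha.le x)
    ((toDual ℝ E).continuous.comp_aestronglyMeasurable ((hG_meas x).const_smul _))
    (.of_forall fun v y _ => by
      rw [LinearIsometryEquiv.norm_map, norm_smul, norm_neg, norm_inv, norm_of_nonneg ha.le]
      exact mul_le_mul_of_nonneg_left (hG_le y v) (inv_nonneg.mpr ha.le))
    ((hw.norm.mul_const √a).const_mul a⁻¹)
    (.of_forall fun v y _ => by
      refine ((hasGradientAt_gaussKernel y v).hasFDerivAt.const_mul (w v)).congr_fderiv ?_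
      rw [← map_smul]
      congr 1
      simp only [G, smul_smul]
      ring_nf)
  rw [hasGradientAt_iff_hasFDerivAt, ← hG_integral, ← integral_smul]
  exact (innerSL ℝ).integral_comp_comm (hG_int.smul (-a⁻¹)) ▸ h_deriv

theorem hasGradientAt_log_smoothedDensity (hw_nonneg : 0 ≤ w) (hw : Integrable w μ)
    (hw_pos : 0 < ∫ v, w v ∂μ) (ha : 0 < a) (x : E) :
    HasGradientAt (fun y => log (smoothedDensity μ w s a y))
      (-a⁻¹ • (x - s • posteriorMean μ w s a x)) x := by
  have hg : smoothedDensity μ w s a x ≠ 0 :=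
    (smoothedDensity_pos hw_nonneg hw hw_pos ha.le x).ne'
  convert (hasGradientAt_smoothedDensity hw ha x).log hg using 1
  rw [posteriorMean]
  match_scalars <;> field_simp

theorem posteriorMean_eq_add_smul_gradient_log_div (hw_nonneg : 0 ≤ w) (hw : Integrable w μ)
    (hw_pos : 0 < ∫ v, w v ∂μ) (hw'_nonneg : 0 ≤ w') (hw' : Integrable w' μ)
    (hw'_pos : 0 < ∫ v, w' v ∂μ) (hs : s ≠ 0) (ha : 0 < a) (x : E) :
    posteriorMean μ w s a x = posteriorMean μ w' s a x +
      (a / s) • gradient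
        (fun y => log (smoothedDensity μ w s a y / smoothedDensity μ w' s a y)) x := by
  have h_log : (fun y => log (smoothedDensity μ w s a y / smoothedDensity μ w' s a y)) =
      fun y => log (smoothedDensity μ w s a y) - log (smoothedDensity μ w' s a y) :=
    funext fun y => log_div (smoothedDensity_pos hw_nonneg hw hw_pos ha.le y).ne'
      (smoothedDensity_pos hw'_nonneg hw' hw'_pos ha.le y).ne'
  rw [h_log, ((hasGradientAt_log_smoothedDensity hw_nonneg hw hw_pos ha x).sub
    (hasGradientAt_log_smoothedDensity hw'_nonneg hw' hw'_pos ha x)).gradient]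
  match_scalars <;> field_simp <;> ring

end GaussianSmoothing

/-- **Conditional posterior mean = posterior mean + scaled likelihood score.**
`m_w(x) = m₁(x) + s σ² ∇ₓ log (g_w(x) / g₁(x))`. -/
theorem conditional_posterior_mean_drift {d : ℕ} (μ : Measure (EuclideanSpace ℝ (Fin d)))
    [IsProbabilityMeasure μ] (s σ : ℝ) (hs : s ≠ 0) (hσ : 0 < σ)
    (w : EuclideanSpace ℝ (Fin d) → ℝ) (hw_meas : Measurable w)
    (hw_nonneg : ∀ x, 0 ≤ w x) (hw_bdd : ∃ C, ∀ x, w x ≤ C)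
    (hw_pos : 0 < ∫ x₀, w x₀ ∂μ)
    (g₁ : EuclideanSpace ℝ (Fin d) → ℝ)
    (hg₁ : ∀ x, g₁ x = ∫ x₀, Real.exp (-‖x - s • x₀‖ ^ 2 / (2 * s ^ 2 * σ ^ 2)) ∂μ)
    (gw : EuclideanSpace ℝ (Fin d) → ℝ)
    (hgw : ∀ x, gw x = ∫ x₀, w x₀ * Real.exp (-‖x - s • x₀‖ ^ 2 / (2 * s ^ 2 * σ ^ 2)) ∂μ)
    (m₁ : EuclideanSpace ℝ (Fin d) → EuclideanSpace ℝ (Fin d))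
    (hm₁ : ∀ x, m₁ x = (g₁ x)⁻¹ •
      ∫ x₀, Real.exp (-‖x - s • x₀‖ ^ 2 / (2 * s ^ 2 * σ ^ 2)) • x₀ ∂μ)
    (mw : EuclideanSpace ℝ (Fin d) → EuclideanSpace ℝ (Fin d))
    (hmw : ∀ x, mw x = (gw x)⁻¹ •
      ∫ x₀, (w x₀ * Real.exp (-‖x - s • x₀‖ ^ 2 / (2 * s ^ 2 * σ ^ 2))) • x₀ ∂μ) :
    ∀ x, mw x = m₁ x + (s * σ ^ 2) • gradient (fun y => Real.log (gw y / g₁ y)) x := by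
  intro x
  obtain ⟨C, hC⟩ := hw_bdd
  have hw_int : Integrable w μ := (integrable_const C).mono' hw_meas.aestronglyMeasurable
    (.of_forall fun v => (norm_of_nonneg (hw_nonneg v)).trans_le (hC v))
  have h_kernel (y v : EuclideanSpace ℝ (Fin d)) :
      exp (-‖y - s • v‖ ^ 2 / (2 * s ^ 2 * σ ^ 2)) = gaussKernel s (s ^ 2 * σ ^ 2) y v := by
    rw [gaussKernel, mul_assoc]
  have hgw' : gw = smoothedDensity μ w s (s ^ 2 * σ ^ 2) :=
    funext fun y => by simp only [hgw, h_kernel, smoothedDensity]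
  have hg₁' : g₁ = smoothedDensity μ 1 s (s ^ 2 * σ ^ 2) :=
    funext fun y => by simp [hg₁, h_kernel, smoothedDensity]
  have hmw' : mw x = posteriorMean μ w s (s ^ 2 * σ ^ 2) x := by
    simp only [hmw, hgw', h_kernel, posteriorMean]
  have hm₁' : m₁ x = posteriorMean μ 1 s (s ^ 2 * σ ^ 2) x := by
    simp [hm₁, hg₁', h_kernel, posteriorMean]
  rw [hmw', hm₁', hgw', hg₁', posteriorMean_eq_add_smul_gradient_log_div hw_nonneg hw_int hw_pos
    zero_le_one (integrable_const 1) (by simp) hs (by positivity)]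
  congr 2
  field_simp
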